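/- Let Ω := ⋃_{j=1}^∞ (4^j, 4^j + 2^j) ⊆ ℝ, equipped with Lebesgue measure, and let f := 𝟏_{(4,6)} be the indicator function of the interval (4,6). Then: (a) for every x₀ ∈ ℝ, liminf_{r→∞} |(x₀−r, x₀+r) ∩ Ω|/(2r) = 0, so Ω does not satisfy the weak measure density (WMD) condition; (b) ∫_Ω |f(x)| dx = 2; (c) for every s ∈ (0,1), J(s) := ∫_Ω ∫_Ω |f(x)−f(y)|/|x−y|^{1+s} dy dx < ∞; and (d) lim_{s→0⁺} s·J(s) = 0. -/

import Mathlib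

noncomputable section

open MeasureTheory Filter Set
open scoped ENNReal NNReal Topology

namespace Paper

/-- `Ω = ⋃_{j ≥ 1} (4^j, 4^j + 2^j)` (indexed below by `j+1`, `j : ℕ`). -/
def ΩX : Set ℝ := ⋃ j : ℕ, Set.Ioo ((4 : ℝ) ^ (j + 1)) ((4 : ℝ) ^ (j + 1) + 2 ^ (j + 1))

/-- `f = 𝟏_{(4,6)}`. -/
def f11 : ℝ → ℝ := (Set.Ioo (4 : ℝ) 6).indicator fun _ => 1

/-- `J(s) = ∫_Ω ∫_Ω |f(x)-f(y)| / |x-y|^{1+s} dy dx`. -/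
def J11 (s : ℝ) : ℝ≥0∞ :=
  ∫⁻ x in ΩX, ∫⁻ y in ΩX,
    ENNReal.ofReal |f11 x - f11 y| / ENNReal.ofReal (|x - y| ^ (1 + s)) ∂volume ∂volume

/-! The pieces `(4^j, 4^j + 2^j)` have lengths growing like the square root of their positions, so
a window ending at `4^(n+1)` meets `Ω` in measure at most `2^(n+1)`, a vanishing fraction of its
length. For `J(s)`, the integrand vanishes unless exactly one of `x, y` lies in `(4,6)`; the other
point then lies in a later piece, so `|x - y| ≥ max x y / 2 ≥ 1`, and the integrand is at most
`2 / max x y`, uniformly in `s ≥ 0`. Since `∫_Ω 2/y dy ≤ ∑ 2·2^(j+1)/4^(j+1) = 2`, this gives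
`J(s) ≤ 8` for all `s ≥ 0`. -/

def piece (j : ℕ) : Set ℝ := Ioo ((4 : ℝ) ^ (j + 1)) ((4 : ℝ) ^ (j + 1) + 2 ^ (j + 1))

lemma volume_piece (j : ℕ) : volume (piece j) = ENNReal.ofReal (2 ^ (j + 1)) := by
  rw [piece, Real.volume_Ioo, add_sub_cancel_left]

lemma piece_zero : piece 0 = Ioo 4 6 := by
  norm_num [piece]

lemma Ioo_four_six_subset_ΩX : Ioo (4 : ℝ) 6 ⊆ ΩX :=
  piece_zero ▸ subset_iUnion piece 0

lemma sixteen_le_of_mem_ΩX {y : ℝ} (hy : y ∈ ΩX) (h46 : y ∉ Ioo (4 : ℝ) 6) : 16 ≤ y := by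
  obtain ⟨j, hj⟩ := mem_iUnion.1 hy
  cases j with
  | zero => exact absurd (piece_zero ▸ hj) h46
  | succ k =>
    have : (4 : ℝ) ^ 2 ≤ 4 ^ (k + 2) := pow_le_pow_right₀ (by norm_num) (by omega)
    linarith [hj.1]

lemma volume_Iio_inter_ΩX_le (n : ℕ) :
    volume (Iio ((4 : ℝ) ^ (n + 1)) ∩ ΩX) ≤ ENNReal.ofReal (2 ^ (n + 1)) := by
  have hsub : Iio ((4 : ℝ) ^ (n + 1)) ∩ ΩX ⊆ ⋃ j ∈ Finset.range n, piece j := by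
    rintro y ⟨hyn, hy⟩
    obtain ⟨j, hj⟩ := mem_iUnion.1 hy
    have hjn : j < n := by
      by_contra! h
      have : (4 : ℝ) ^ (n + 1) ≤ 4 ^ (j + 1) := pow_le_pow_right₀ (by norm_num) (by omega)
      linarith [hj.1, mem_Iio.1 hyn]
    exact mem_biUnion (Finset.mem_range.2 hjn) hj
  have hgeom : ∑ j ∈ Finset.range n, (2 : ℝ) ^ (j + 1) ≤ 2 ^ (n + 1) := by
    have := geom_sum_mul (2 : ℝ) n
    simp only [pow_succ, ← Finset.sum_mul]
    nlinarith [pow_pos (two_pos (α := ℝ)) n]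
  calc volume (Iio ((4 : ℝ) ^ (n + 1)) ∩ ΩX)
      ≤ ∑ j ∈ Finset.range n, volume (piece j) :=
        (measure_mono hsub).trans (measure_biUnion_finset_le _ _)
    _ = ENNReal.ofReal (∑ j ∈ Finset.range n, (2 : ℝ) ^ (j + 1)) := by
        simp only [volume_piece]
        exact (ENNReal.ofReal_sum_of_nonneg fun j _ => by positivity).symm
    _ ≤ ENNReal.ofReal (2 ^ (n + 1)) := ENNReal.ofReal_le_ofReal hgeom

lemma liminf_eq_zero_of_tendsto_comp {β : Type*} {l : Filter β} {u : β → ℝ≥0∞} {φ : ℕ → β}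
    (hφ : Tendsto φ atTop l) (hu : Tendsto (u ∘ φ) atTop (𝓝 0)) : liminf u l = 0 :=
  nonpos_iff_eq_zero.1 <| hu.liminf_eq ▸ liminf_le_liminf_of_le hφ

lemma liminf_density_ΩX (x₀ : ℝ) :
    liminf (fun r : ℝ => volume (Ioo (x₀ - r) (x₀ + r) ∩ ΩX) / ENNReal.ofReal (2 * r)) atTop
      = 0 := by
  have h4 : Tendsto (fun n : ℕ => (4 : ℝ) ^ (n + 1)) atTop atTop :=
    (tendsto_pow_atTop_atTop_of_one_lt (by norm_num)).comp (tendsto_add_atTop_nat 1)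
  refine liminf_eq_zero_of_tendsto_comp (φ := fun n => 4 ^ (n + 1) - x₀)
    (tendsto_atTop_add_const_right _ _ h4) ?_
  have hgeom : Tendsto (fun n : ℕ => ENNReal.ofReal ((2 / 4 : ℝ) ^ (n + 1))) atTop (𝓝 0) :=
    ENNReal.ofReal_zero ▸ ENNReal.tendsto_ofReal
      ((tendsto_pow_atTop_nhds_zero_of_lt_one (by norm_num) (by norm_num)).comp
        (tendsto_add_atTop_nat 1))
  refine tendsto_of_tendsto_of_tendsto_of_le_of_le' tendsto_const_nhds hgeom
    (Eventually.of_forall fun _ => zero_le) ?_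
  filter_upwards [h4.eventually_ge_atTop (2 * x₀)] with n hn
  have hwindow :
      Ioo (x₀ - (4 ^ (n + 1) - x₀)) (x₀ + (4 ^ (n + 1) - x₀)) ⊆ Iio ((4 : ℝ) ^ (n + 1)) :=
    fun y hy => by simpa using hy.2
  calc volume (Ioo (x₀ - (4 ^ (n + 1) - x₀)) (x₀ + (4 ^ (n + 1) - x₀)) ∩ ΩX)
        / ENNReal.ofReal (2 * (4 ^ (n + 1) - x₀))
      ≤ ENNReal.ofReal (2 ^ (n + 1)) / ENNReal.ofReal (4 ^ (n + 1)) :=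
        ENNReal.div_le_div ((measure_mono (inter_subset_inter_left _ hwindow)).trans
          (volume_Iio_inter_ΩX_le n)) (ENNReal.ofReal_le_ofReal (by linarith))
    _ = ENNReal.ofReal ((2 / 4 : ℝ) ^ (n + 1)) := by
        rw [div_pow, ENNReal.ofReal_div_of_pos (by positivity)]

lemma kernel_le_of_mem_Ioo_of_notMem {s x y : ℝ} (hs : 0 ≤ s) (hx : x ∈ Ioo (4 : ℝ) 6)
    (hy : y ∈ ΩX) (hy46 : y ∉ Ioo (4 : ℝ) 6) :
    ENNReal.ofReal |f11 x - f11 y| / ENNReal.ofReal (|x - y| ^ (1 + s))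
      ≤ ENNReal.ofReal (2 / y) := by
  have h16 := sixteen_le_of_mem_ΩX hy hy46
  have hxy : y / 2 ≤ |x - y| := by
    rw [abs_sub_comm, abs_of_pos (by linarith [hx.2])]
    linarith [hx.2]
  have hnum : ENNReal.ofReal |f11 x - f11 y| ≤ 1 := by
    simp [f11, indicator_of_mem hx, indicator_of_notMem hy46]
  have hden : ENNReal.ofReal (y / 2) ≤ ENNReal.ofReal (|x - y| ^ (1 + s)) :=
    ENNReal.ofReal_le_ofReal <| hxy.trans <| Real.self_le_rpow_of_one_le
      (by linarith) (by linarith)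
  calc _ ≤ 1 / ENNReal.ofReal (y / 2) := ENNReal.div_le_div hnum hden
    _ = ENNReal.ofReal (2 / y) := by
        rw [one_div, ← ENNReal.ofReal_inv_of_pos (by linarith), inv_div]

lemma setLIntegral_piece_two_div_le (j : ℕ) :
    ∫⁻ y in piece j, ENNReal.ofReal (2 / y) ≤ 2 * 2⁻¹ ^ (j + 1) := by
  have harith : 2 / (4 : ℝ) ^ (j + 1) * 2 ^ (j + 1) = 2 * 2⁻¹ ^ (j + 1) := by
    rw [show (4 : ℝ) = 2 * 2 by norm_num, mul_pow, inv_pow]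
    field_simp
  calc ∫⁻ y in piece j, ENNReal.ofReal (2 / y)
      ≤ ∫⁻ _ in piece j, ENNReal.ofReal (2 / 4 ^ (j + 1)) :=
        setLIntegral_mono' measurableSet_Ioo fun y hy => ENNReal.ofReal_le_ofReal <|
          div_le_div_of_nonneg_left zero_le_two (by positivity) hy.1.le
    _ = ENNReal.ofReal (2 / 4 ^ (j + 1) * 2 ^ (j + 1)) := by
        rw [setLIntegral_const, volume_piece, ENNReal.ofReal_mul (by positivity)]
    _ = 2 * 2⁻¹ ^ (j + 1) := by
        rw [harith, ENNReal.ofReal_mul zero_le_two, ENNReal.ofReal_pow (by norm_num),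
          ENNReal.ofReal_inv_of_pos two_pos]
        norm_num

lemma setLIntegral_ΩX_two_div_le : ∫⁻ y in ΩX, ENNReal.ofReal (2 / y) ≤ 2 :=
  calc ∫⁻ y in ΩX, ENNReal.ofReal (2 / y)
      ≤ ∑' j, ∫⁻ y in piece j, ENNReal.ofReal (2 / y) := lintegral_iUnion_le _ _
    _ ≤ ∑' j : ℕ, 2 * 2⁻¹ ^ (j + 1) := ENNReal.tsum_le_tsum setLIntegral_piece_two_div_le
    _ = 2 := by
        rw [ENNReal.tsum_mul_left, ENNReal.tsum_geometric_add_one, ENNReal.one_sub_inv_two,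
          inv_inv, ENNReal.inv_mul_cancel two_ne_zero ENNReal.ofNat_ne_top, mul_one]

@[fun_prop]
lemma measurable_f11 : Measurable f11 :=
  measurable_const.indicator measurableSet_Ioo

lemma setLIntegral_ΩX_ofReal_abs_f11 : ∫⁻ x in ΩX, ENNReal.ofReal |f11 x| = 2 := by
  have hind : (fun x => ENNReal.ofReal |f11 x|) = (Ioo (4 : ℝ) 6).indicator 1 := by
    ext x
    by_cases hx : x ∈ Ioo (4 : ℝ) 6 <;> simp [f11, hx]
  rw [hind, lintegral_indicator_one measurableSet_Ioo,
    Measure.restrict_apply measurableSet_Ioo, inter_eq_left.2 Ioo_four_six_subset_ΩX,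
    Real.volume_Ioo]
  norm_num

lemma kernel_le {s x y : ℝ} (hs : 0 ≤ s) (hx : x ∈ ΩX) (hy : y ∈ ΩX) :
    ENNReal.ofReal |f11 x - f11 y| / ENNReal.ofReal (|x - y| ^ (1 + s))
      ≤ ENNReal.ofReal |f11 x| * ENNReal.ofReal (2 / y)
        + ENNReal.ofReal |f11 y| * ENNReal.ofReal (2 / x) := by
  by_cases hx46 : x ∈ Ioo (4 : ℝ) 6 <;> by_cases hy46 : y ∈ Ioo (4 : ℝ) 6
  · simp [f11, hx46, hy46]
  · calc _ ≤ ENNReal.ofReal (2 / y) := kernel_le_of_mem_Ioo_of_notMem hs hx46 hy hy46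
      _ = ENNReal.ofReal |f11 x| * ENNReal.ofReal (2 / y) := by simp [f11, hx46]
      _ ≤ _ := le_self_add
  · rw [abs_sub_comm (f11 x), abs_sub_comm x]
    calc _ ≤ ENNReal.ofReal (2 / x) := kernel_le_of_mem_Ioo_of_notMem hs hy46 hx hx46
      _ = ENNReal.ofReal |f11 y| * ENNReal.ofReal (2 / x) := by simp [f11, hy46]
      _ ≤ _ := le_add_self
  · simp [f11, hx46, hy46]

lemma J11_le {s : ℝ} (hs : 0 ≤ s) : J11 s ≤ 8 := by
  set G := ∫⁻ y in ΩX, ENNReal.ofReal (2 / y)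
  have hΩ : MeasurableSet ΩX := MeasurableSet.iUnion fun _ => measurableSet_Ioo
  have hA : Measurable fun x => ENNReal.ofReal |f11 x| := by fun_prop
  have hg : Measurable fun y : ℝ => ENNReal.ofReal (2 / y) := by fun_prop
  calc J11 s
      ≤ ∫⁻ x in ΩX, ∫⁻ y in ΩX, ENNReal.ofReal |f11 x| * ENNReal.ofReal (2 / y)
          + ENNReal.ofReal |f11 y| * ENNReal.ofReal (2 / x) :=
        setLIntegral_mono' hΩ fun x hx => setLIntegral_mono' hΩ fun y hy => kernel_le hs hx hy
    _ = ∫⁻ x in ΩX, ENNReal.ofReal |f11 x| * G + 2 * ENNReal.ofReal (2 / x) := by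
        refine lintegral_congr fun x => ?_
        rw [lintegral_add_left (hg.const_mul _), lintegral_const_mul _ hg,
          lintegral_mul_const _ hA, setLIntegral_ΩX_ofReal_abs_f11]
    _ = 2 * G + 2 * G := by
        rw [lintegral_add_left (hA.mul_const _), lintegral_mul_const _ hA,
          lintegral_const_mul _ hg, setLIntegral_ΩX_ofReal_abs_f11, mul_comm]
    _ ≤ 2 * 2 + 2 * 2 := by gcongr <;> exact setLIntegral_ΩX_two_div_le
    _ = 8 := by norm_num

theorem statement11 :
    (∀ x₀ : ℝ,
      liminf (fun r : ℝ =>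
        volume (Set.Ioo (x₀ - r) (x₀ + r) ∩ ΩX) / ENNReal.ofReal (2 * r)) atTop = 0) ∧
    (¬ ∃ (x₀ C₀ : ℝ), 0 < C₀ ∧ C₀ ≤ 1 ∧
      ENNReal.ofReal C₀ ≤
        liminf (fun r : ℝ =>
          volume (Set.Ioo (x₀ - r) (x₀ + r) ∩ ΩX) / ENNReal.ofReal (2 * r)) atTop) ∧
    (∫⁻ x in ΩX, ENNReal.ofReal |f11 x| ∂volume) = 2 ∧
    (∀ s ∈ Set.Ioo (0:ℝ) 1, J11 s < ∞) ∧
    Tendsto (fun s : ℝ => ENNReal.ofReal s * J11 s) (𝓝[>] (0:ℝ)) (𝓝 0) := by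
  refine ⟨liminf_density_ΩX, ?_, setLIntegral_ΩX_ofReal_abs_f11,
    fun s hs => (J11_le hs.1.le).trans_lt (by norm_num), ?_⟩
  · rintro ⟨x₀, C₀, hC₀, -, hle⟩
    rw [liminf_density_ΩX x₀, nonpos_iff_eq_zero, ENNReal.ofReal_eq_zero] at hle
    exact hle.not_gt hC₀
  · have hlin : Tendsto (fun s : ℝ => ENNReal.ofReal s * 8) (𝓝[>] 0) (𝓝 0) := by
      simpa using ENNReal.Tendsto.mul_const
        ((ENNReal.continuous_ofReal.tendsto 0).mono_left nhdsWithin_le_nhds)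
        (Or.inr ENNReal.ofNat_ne_top)
    refine tendsto_of_tendsto_of_tendsto_of_le_of_le' tendsto_const_nhds hlin
      (Eventually.of_forall fun _ => zero_le) ?_
    filter_upwards [self_mem_nhdsWithin] with s hs
    exact mul_le_mul_right (J11_le (le_of_lt hs)) _

end Paper
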